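/- For n = 1, 2, 3, …, let X_n be a locally compact, second countable, Hausdorff topological space and let W_0 = ({0} ∪ ∪_{k=1}^∞ X_1 × ⋯ × X_k) ∪ Π_{n=1}^∞ X_n carry the quotient topology induced by the truncation map Q. Then for a sequence {x^n} in W_0 and x ∈ W_0, x^n → x in W_0 if and only if x^n → x pointwise, i.e.: (i) if x ∈ Z = Π_{n=1}^∞ X_n, then ℓ(x^n) → ∞ and x^n_i → x_i in X_i for every i; (ii) if x ∈ Y_0 (a finite string, of length ℓ(x)), then ℓ(x^n) ≥ ℓ(x) eventually, x^n_i → x_i in X_i for 1 ≤ i ≤ ℓ(x), and x^n_{ℓ(x)+1} → ∞_{ℓ(x)+1} in X_{ℓ(x)+1}^∞, where x^n_{ℓ(x)+1} is taken to be ∞_{ℓ(x)+1} whenever ℓ(x^n) = ℓ(x). -/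

import Mathlib

open Filter Topology

/-- The set `W₀ = Y₀ ∪ Z`: the disjoint union of the finite products
`Y^k = X_1 × ⋯ × X_k` (with `Y^0 = {0}` a single point, the empty string) and the
infinite product `Z = Π_{n} X_n`.  (Indices are `0`-based here: `X 0, X 1, …` play the
roles of `X_1, X_2, …`.) -/
def W0 (X : ℕ → Type) : Type := (Σ k : ℕ, ∀ i : Fin k, X i) ⊕ (∀ n, X n)

namespace W0

variable {X : ℕ → Type}

/-- A finite string, an element of `Y₀ = ∪_k Y^k ⊂ W₀`. -/
def fin (p : Σ k : ℕ, ∀ i : Fin k, X i) : W0 X := Sum.inl p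

/-- An infinite string, an element of `Z = Π_n X_n ⊂ W₀`. -/
def inf (z : ∀ n, X n) : W0 X := Sum.inr z

/-- The point `0`, the empty string: the unique element of `Y^0`. -/
def zero : W0 X := Sum.inl ⟨0, fun i => i.elim0⟩

/-- The length `ℓ(w) ∈ ℕ ∪ {∞}` of an element of `W₀`. -/
def len : W0 X → ℕ∞ := Sum.elim (fun p => (p.1 : ℕ∞)) (fun _ => ⊤)

/-- The `i`-th coordinate of an element of `W₀`, as an element of the one-point
compactification `X_i^∞`; it is taken to be `∞_i` when `i ≥ ℓ(w)`. -/
def coord (w : W0 X) (i : ℕ) : OnePoint (X i) :=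
  Sum.elim
    (fun p : Σ k : ℕ, ∀ j : Fin k, X j =>
      if h : i < p.1 then ((p.2 ⟨i, h⟩ : X i) : OnePoint (X i)) else OnePoint.infty)
    (fun z => ((z i : X i) : OnePoint (X i))) w

/-- The value of a point of `X^∞` other than `∞`. -/
noncomputable def val {Y : Type} (o : OnePoint Y) (h : o ≠ OnePoint.infty) : Y :=
  (OnePoint.ne_infty_iff_exists.mp h).choose

open Classical in
/-- The truncation map `Q : A = Π_n X_n^∞ → W₀`: `Q({x_i}) = {x_i} ∈ Z` if no
coordinate is a point at infinity; `Q({x_i}) = (x_1, …, x_n) ∈ Y^n` if `n` is smallest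
with `x_{n+1} = ∞_{n+1}`; `Q({x_i}) = 0` if `x_1 = ∞_1`. -/
noncomputable def Q (x : ∀ n, OnePoint (X n)) : W0 X :=
  if h : ∃ n, x n = OnePoint.infty then
    fin ⟨Nat.find h, fun i => val (x i) (Nat.find_min h i.isLt)⟩
  else
    inf fun n => val (x n) (fun hn => h ⟨n, hn⟩)

/-- `W₀` carries the quotient topology induced by the surjection `Q` from the product
`A = Π_n X_n^∞` of the one-point compactifications. -/
noncomputable instance [∀ n, TopologicalSpace (X n)] : TopologicalSpace (W0 X) :=
  TopologicalSpace.coinduced Q Pi.topologicalSpace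

end W0

/-!
Both directions go through the coordinates `i ≤ ℓ(w)` of the limit `w`, i.e. those up to and
including its first point at infinity. For such `i`, the strings whose first `i` coordinates are
finite and whose `i`-th coordinate lies in an open `S` form an open set, because their preimage
under `Q` is an open cylinder of `A`; so these coordinates are continuous at `w`.

Conversely, the coordinate strings of `x^n` lift the sequence to `A`, but the lifted coordinates
beyond `ℓ(w)` need not converge. Restricting `A` to the coordinates `i ≤ ℓ(w)` is a closed
map, the remaining factor being compact, and its fibre over the coordinates of `w` lies in
`Q⁻¹{w}`; this is enough to push the convergence of the restricted lift down to `W₀`.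
-/

theorem Continuous.tendsto_comp_of_isClosedMap {α A B W : Type*} [TopologicalSpace A]
    [TopologicalSpace B] [TopologicalSpace W] {Q : A → W} (hQ : Continuous Q) {π : A → B}
    (hπ : IsClosedMap π) {l : Filter α} {g : α → A} {b : B} {x : W}
    (hg : Tendsto (π ∘ g) l (𝓝 b)) (hfiber : ∀ a, π a = b → Q a = x) :
    Tendsto (Q ∘ g) l (𝓝 x) := by
  refine (nhds_basis_opens x).tendsto_right_iff.mpr fun U ⟨hxU, hU⟩ => ?_
  have hC : IsClosed (π '' (Q ⁻¹' U)ᶜ) := hπ _ (hU.preimage hQ).isClosed_compl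
  have hb : b ∉ π '' (Q ⁻¹' U)ᶜ := by
    rintro ⟨a, haU, rfl⟩
    exact haU (by rw [Set.mem_preimage, hfiber a rfl]; exact hxU)
  filter_upwards [hg (hC.isOpen_compl.mem_nhds hb)] with n hn
  by_contra hnU
  exact hn ⟨g n, hnU, rfl⟩

namespace W0

variable {X : ℕ → Type}

theorem coord_ne_infty_iff {w : W0 X} {i : ℕ} :
    w.coord i ≠ OnePoint.infty ↔ (i : ℕ∞) < w.len := by
  cases w with
  | inl p =>
    simp only [coord, len, Sum.elim_inl, Nat.cast_lt]
    split_ifs with h <;> simp [h]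
  | inr z => simp [coord, len]

theorem le_len_iff_forall_coord_ne_infty {w : W0 X} {i : ℕ} :
    (i : ℕ∞) ≤ w.len ↔ ∀ j < i, w.coord j ≠ OnePoint.infty := by
  simp only [coord_ne_infty_iff]
  cases i with
  | zero => simp
  | succ m =>
    rw [Nat.cast_succ, ENat.natCast_add_one_le_iff]
    exact ⟨fun h j hj => lt_of_le_of_lt (by exact_mod_cast Nat.lt_succ_iff.mp hj) h,
      fun h => h m m.lt_succ_self⟩

theorem ext_coord {v w : W0 X} (h : ∀ i, v.coord i = w.coord i) : v = w := by
  have hlen : v.len = w.len := ENat.eq_of_forall_natCast_le_iff fun i => by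
    simp only [le_len_iff_forall_coord_ne_infty, h]
  cases v with
  | inl p =>
    cases w with
    | inl q =>
      obtain ⟨k, f⟩ := p
      obtain ⟨k', g⟩ := q
      obtain rfl : k = k' := by simpa [len] using hlen
      refine congrArg Sum.inl (Sigma.ext rfl (heq_of_eq (funext fun i => ?_)))
      simpa [coord, i.isLt] using h i
    | inr z => exact absurd hlen (ENat.natCast_ne_top _)
  | inr z =>
    cases w with
    | inl q => exact absurd hlen.symm (ENat.natCast_ne_top _)
    | inr z' => exact congrArg Sum.inr (funext fun i => OnePoint.coe_injective (h i))

theorem coe_val {Y : Type} (o : OnePoint Y) (h : o ≠ OnePoint.infty) :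
    ((val o h : Y) : OnePoint Y) = o :=
  (OnePoint.ne_infty_iff_exists.mp h).choose_spec

theorem coord_Q_of_forall_lt {a : ∀ n, OnePoint (X n)} {i : ℕ}
    (h : ∀ j < i, a j ≠ OnePoint.infty) : (Q a).coord i = a i := by
  classical
  unfold Q
  split_ifs with hex
  · have hi : i ≤ Nat.find hex := not_lt.mp fun hlt => h _ hlt (Nat.find_spec hex)
    rcases hi.lt_or_eq with hlt | rfl
    · simp only [fin, coord, Sum.elim_inl, dif_pos hlt, coe_val]
    · simp only [fin, coord, Sum.elim_inl, lt_irrefl, dif_neg, not_false_eq_true,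
        Nat.find_spec hex]
  · simp [inf, coord, coe_val]

theorem coord_Q_of_exists_le {a : ∀ n, OnePoint (X n)} {i : ℕ}
    (h : ∃ j ≤ i, a j = OnePoint.infty) : (Q a).coord i = OnePoint.infty := by
  classical
  obtain ⟨j, hji, hj⟩ := h
  have hex : ∃ n, a n = OnePoint.infty := ⟨j, hj⟩
  rw [Q, dif_pos hex]
  simp only [fin, coord, Sum.elim_inl, dif_neg (not_lt.mpr ((Nat.find_min' hex hj).trans hji))]

theorem Q_eq_of_coord {a : ∀ n, OnePoint (X n)} {w : W0 X}
    (h : ∀ i : ℕ, (i : ℕ∞) ≤ w.len → a i = w.coord i) : Q a = w := by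
  have hle : ∀ i : ℕ, (∀ j < i, a j ≠ OnePoint.infty) → (i : ℕ∞) ≤ w.len := by
    intro i
    induction i with
    | zero => simp
    | succ i ih =>
      intro ha
      rw [Nat.cast_succ, ENat.natCast_add_one_le_iff, ← coord_ne_infty_iff,
        ← h i (ih fun j hj => ha j (hj.trans i.lt_succ_self))]
      exact ha i i.lt_succ_self
  refine ext_coord fun i => ?_
  by_cases ha : ∀ j < i, a j ≠ OnePoint.infty
  · rw [coord_Q_of_forall_lt ha, h i (hle i ha)]
  · push Not at ha
    obtain ⟨j, hji, hj⟩ := ha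
    rw [coord_Q_of_exists_le ⟨j, hji.le, hj⟩, eq_comm, ← not_ne_iff, coord_ne_infty_iff]
    intro hi
    have hj' : (j : ℕ∞) < w.len := lt_trans (by exact_mod_cast hji) hi
    exact coord_ne_infty_iff.mpr hj' (h j hj'.le ▸ hj)

theorem Q_coord (w : W0 X) : Q (fun i => w.coord i) = w :=
  Q_eq_of_coord fun _ _ => rfl

section Topology

variable [∀ n, TopologicalSpace (X n)] {α : Type*} {l : Filter α} {v : α → W0 X}

theorem continuous_Q : Continuous (Q : (∀ n, OnePoint (X n)) → W0 X) :=
  continuous_coinduced_rng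

theorem isOpen_setOf_le_len_and_coord_mem (i : ℕ) {S : Set (OnePoint (X i))} (hS : IsOpen S) :
    IsOpen {w : W0 X | (i : ℕ∞) ≤ w.len ∧ w.coord i ∈ S} := by
  have hpre : Q ⁻¹' {w : W0 X | (i : ℕ∞) ≤ w.len ∧ w.coord i ∈ S} =
      {a | (∀ j < i, a j ≠ OnePoint.infty) ∧ a i ∈ S} := by
    ext a
    simp only [Set.mem_preimage, Set.mem_ofPred_eq, le_len_iff_forall_coord_ne_infty]
    constructor
    · rintro ⟨hQa, haS⟩
      have ha : ∀ j < i, a j ≠ OnePoint.infty := fun j hj haj =>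
        hQa j hj (coord_Q_of_exists_le ⟨j, le_rfl, haj⟩)
      exact ⟨ha, coord_Q_of_forall_lt ha ▸ haS⟩
    · rintro ⟨ha, haS⟩
      refine ⟨fun j hj => ?_, (coord_Q_of_forall_lt ha).symm ▸ haS⟩
      rw [coord_Q_of_forall_lt fun m hm => ha m (hm.trans hj)]
      exact ha j hj
  rw [isOpen_coinduced, hpre]
  refine IsOpen.and ?_ (hS.preimage (continuous_apply i))
  convert (Set.finite_Iio i).isOpen_biInter fun j _ => OnePoint.isClosed_infty.isOpen_compl.preimage
    (continuous_apply (A := fun n => OnePoint (X n)) j)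
  ext a
  simp

theorem continuousAt_coord {w : W0 X} {i : ℕ} (h : (i : ℕ∞) ≤ w.len) :
    ContinuousAt (fun v : W0 X => v.coord i) w :=
  (nhds_basis_opens _).tendsto_right_iff.mpr fun _ ⟨hwS, hS⟩ =>
    Filter.mem_of_superset ((isOpen_setOf_le_len_and_coord_mem i hS).mem_nhds ⟨h, hwS⟩)
      fun _ hv => hv.2

theorem tendsto_of_tendsto_coord {w : W0 X}
    (h : ∀ i : ℕ, (i : ℕ∞) ≤ w.len →
      Tendsto (fun n => (v n).coord i) l (𝓝 (w.coord i))) :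
    Tendsto v l (𝓝 w) := by
  let S : Set ℕ := {i | (i : ℕ∞) ≤ w.len}
  have key := continuous_Q.tendsto_comp_of_isClosedMap
    (isClosedMap_restrict_of_compactSpace (S := S)) (g := fun n i => (v n).coord i)
    (tendsto_pi_nhds.mpr fun i => h i i.2)
    fun a ha => Q_eq_of_coord fun i hi => congrFun ha ⟨i, hi⟩
  simpa only [Function.comp_def, Q_coord] using key

theorem tendsto_nhds_iff_coord {w : W0 X} :
    Tendsto v l (𝓝 w) ↔ ∀ i : ℕ, (i : ℕ∞) ≤ w.len →
      Tendsto (fun n => (v n).coord i) l (𝓝 (w.coord i)) :=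
  ⟨fun hv _ hi => (continuousAt_coord hi).tendsto.comp hv, tendsto_of_tendsto_coord⟩

theorem eventually_lt_len_of_tendsto_coord {i : ℕ} {y : X i}
    (h : Tendsto (fun n => (v n).coord i) l (𝓝 (y : OnePoint (X i)))) :
    ∀ᶠ n in l, (i : ℕ∞) < (v n).len :=
  (h.eventually_mem (OnePoint.isOpen_range_coe.mem_nhds ⟨y, rfl⟩)).mono fun _ ⟨z, hz⟩ =>
    coord_ne_infty_iff.mp (hz ▸ OnePoint.coe_ne_infty z)

theorem tendsto_nhds_inf_iff {z : ∀ n, X n} :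
    Tendsto v l (𝓝 (inf z)) ↔ (∀ M : ℕ, ∀ᶠ n in l, (M : ℕ∞) ≤ (v n).len) ∧
      ∀ i, Tendsto (fun n => (v n).coord i) l (𝓝 (z i : OnePoint (X i))) := by
  rw [tendsto_nhds_iff_coord]
  simp only [inf, len, coord, Sum.elim_inr, le_top, forall_const]
  refine ⟨fun h => ⟨fun M => ?_, h⟩, And.right⟩
  exact (eventually_lt_len_of_tendsto_coord (h M)).mono fun _ => le_of_lt

theorem tendsto_nhds_fin_iff {k : ℕ} {f : ∀ i : Fin k, X i} :
    Tendsto v l (𝓝 (fin ⟨k, f⟩)) ↔ (∀ᶠ n in l, (k : ℕ∞) ≤ (v n).len) ∧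
      (∀ i : Fin k, Tendsto (fun n => (v n).coord i) l (𝓝 (f i : OnePoint (X i)))) ∧
      Tendsto (fun n => (v n).coord k) l (𝓝 (OnePoint.infty : OnePoint (X k))) := by
  rw [tendsto_nhds_iff_coord]
  simp only [fin, len, Sum.elim_inl, Nat.cast_le]
  constructor
  · intro h
    have hf : ∀ i : Fin k, Tendsto (fun n => (v n).coord i) l (𝓝 (f i : OnePoint (X i))) :=
      fun i => by simpa [coord, i.isLt] using h i i.isLt.le
    refine ⟨?_, hf, by simpa [coord] using h k le_rfl⟩
    cases k with
    | zero => simp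
    | succ m =>
      exact (eventually_lt_len_of_tendsto_coord (hf (Fin.last m))).mono fun _ =>
        ENat.natCast_add_one_le_iff.mpr
  · rintro ⟨-, hf, hk⟩ i hi
    rcases hi.lt_or_eq with hlt | rfl
    · simpa [coord, hlt] using hf ⟨i, hlt⟩
    · simpa [coord] using hk

end Topology

end W0

theorem stmt10_general (X : ℕ → Type) [∀ n, TopologicalSpace (X n)]
    (xseq : ℕ → W0 X) (x : W0 X) :
    Filter.Tendsto xseq Filter.atTop (nhds x) ↔
      ((∃ z : ∀ n, X n, x = W0.inf z ∧
          (∀ M : ℕ, ∀ᶠ n in Filter.atTop, (M : ℕ∞) ≤ (xseq n).len) ∧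
          ∀ i : ℕ, Filter.Tendsto (fun n => (xseq n).coord i) Filter.atTop
            (nhds ((z i : X i) : OnePoint (X i)))) ∨
        (∃ (k : ℕ) (f : ∀ i : Fin k, X i), x = W0.fin ⟨k, f⟩ ∧
          (∀ᶠ n in Filter.atTop, (k : ℕ∞) ≤ (xseq n).len) ∧
          (∀ i : Fin k, Filter.Tendsto (fun n => (xseq n).coord i) Filter.atTop
            (nhds ((f i : X i) : OnePoint (X i)))) ∧
          Filter.Tendsto (fun n => (xseq n).coord k) Filter.atTop
            (nhds (OnePoint.infty : OnePoint (X k))))) := by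
  cases x with
  | inr z =>
    rw [show Sum.inr z = W0.inf z from rfl, W0.tendsto_nhds_inf_iff]
    refine ⟨fun h => Or.inl ⟨z, rfl, h⟩, ?_⟩
    rintro (⟨z', hz, h⟩ | ⟨k, f, hx, -⟩)
    · cases Sum.inr_injective hz
      exact h
    · exact absurd hx Sum.inr_ne_inl
  | inl p =>
    obtain ⟨k, f⟩ := p
    rw [show Sum.inl ⟨k, f⟩ = W0.fin ⟨k, f⟩ from rfl, W0.tendsto_nhds_fin_iff]
    refine ⟨fun h => Or.inr ⟨k, f, rfl, h⟩, ?_⟩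
    rintro (⟨z, hx, -⟩ | ⟨k', f', hx, h⟩)
    · exact absurd hx Sum.inl_ne_inr
    · cases Sum.inl_injective hx
      exact h

/-- Theorem 3.6: convergence in `W₀` is pointwise convergence: `x^n → x` in the quotient
topology iff (i) for `x ∈ Z`: `ℓ(x^n) → ∞` and `x^n_i → x_i` in `X_i` for all `i`, or
(ii) for `x ∈ Y₀` of length `k`: eventually `ℓ(x^n) ≥ k`, `x^n_i → x_i` in `X_i` for
`i < k`, and `x^n_{k+1} → ∞_{k+1}` in `X_{k+1}^∞` (where the `(k+1)`-th coordinate of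
`x^n` is taken to be the point at infinity whenever `ℓ(x^n) = k`; this is exactly the
convention built into `W0.coord`). -/
theorem stmt10 (X : ℕ → Type) [∀ n, TopologicalSpace (X n)]
    [∀ n, LocallyCompactSpace (X n)] [∀ n, SecondCountableTopology (X n)]
    [∀ n, T2Space (X n)] (xseq : ℕ → W0 X) (x : W0 X) :
    Filter.Tendsto xseq Filter.atTop (nhds x) ↔
      ((∃ z : ∀ n, X n, x = W0.inf z ∧
          (∀ M : ℕ, ∀ᶠ n in Filter.atTop, (M : ℕ∞) ≤ (xseq n).len) ∧
          ∀ i : ℕ, Filter.Tendsto (fun n => (xseq n).coord i) Filter.atTop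
            (nhds ((z i : X i) : OnePoint (X i)))) ∨
        (∃ (k : ℕ) (f : ∀ i : Fin k, X i), x = W0.fin ⟨k, f⟩ ∧
          (∀ᶠ n in Filter.atTop, (k : ℕ∞) ≤ (xseq n).len) ∧
          (∀ i : Fin k, Filter.Tendsto (fun n => (xseq n).coord i) Filter.atTop
            (nhds ((f i : X i) : OnePoint (X i)))) ∧
          Filter.Tendsto (fun n => (xseq n).coord k) Filter.atTop
            (nhds (OnePoint.infty : OnePoint (X k))))) :=
  stmt10_general X xseq x
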